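/- Let K be a nonempty closed subset of the Cantor set such that K is homeomorphic to K ⊔ K ⊔ K but K is not homeomorphic to K ⊔ K. Let G be a connected metrizable space with at least two points such that every continuous map from G to itself is either constant or the identity. Then the product space K × G is homeomorphic to a clopen subspace of (K ⊔ K) × G, and (K ⊔ K) × G is homeomorphic to a clopen subspace of K × G, but K × G is not homeomorphic to (K ⊔ K) × G. -/

import Mathlib

open Cardinal

/-- `A` is homeomorphic to a clopen subset of `B`. -/
def HomeoToClopenSubset (A : Type*) [TopologicalSpace A]
    (B : Type*) [TopologicalSpace B] : Prop :=
  ∃ t : Set B, IsClopen t ∧ Nonempty (A ≃ₜ t)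

/-!
A homeomorphism `h : X × G ≃ₜ Y × G` with `G` connected and `X`, `Y` totally disconnected maps
each slice `{x} × G` into a single slice `{y} × G`, so it descends to a homeomorphism `X ≃ₜ Y`.
Since `K ≃ₜ K ⊕ K ⊕ K`, the space `K ⊕ K` is homeomorphic to a clopen subset of `K` (and `K` is
trivially one of `K ⊕ K`), which survives taking products with `G`; but `K × G ≃ₜ (K ⊕ K) × G`
would descend to `K ≃ₜ K ⊕ K`.
-/

section HomeoToClopenSubset

variable {A B C : Type*} [TopologicalSpace A] [TopologicalSpace B] [TopologicalSpace C]

theorem homeoToClopenSubset_sum_left : HomeoToClopenSubset A (A ⊕ B) :=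
  ⟨Set.range Sum.inl, isClopen_range_inl, ⟨Topology.IsEmbedding.inl.toHomeomorph⟩⟩

theorem homeoToClopenSubset_sum_right : HomeoToClopenSubset B (A ⊕ B) :=
  ⟨Set.range Sum.inr, isClopen_range_inr, ⟨Topology.IsEmbedding.inr.toHomeomorph⟩⟩

theorem HomeoToClopenSubset.trans_homeomorph (h : HomeoToClopenSubset A B) (e : B ≃ₜ C) :
    HomeoToClopenSubset A C := by
  obtain ⟨t, ht, ⟨f⟩⟩ := h
  exact ⟨e '' t, e.image_eq_preimage_symm t ▸ ht.preimage e.symm.continuous, ⟨f.trans (e.image t)⟩⟩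

theorem HomeoToClopenSubset.prod_right (h : HomeoToClopenSubset A B) (G : Type*)
    [TopologicalSpace G] : HomeoToClopenSubset (A × G) (B × G) := by
  obtain ⟨t, ht, ⟨f⟩⟩ := h
  exact ⟨t ×ˢ Set.univ, ht.prod isClopen_univ,
    ⟨(f.prodCongr (Homeomorph.Set.univ G).symm).trans (Homeomorph.Set.prod _ _).symm⟩⟩

end HomeoToClopenSubset

namespace Homeomorph

variable {X Y G : Type*} [TopologicalSpace X] [TopologicalSpace Y] [TopologicalSpace G]
  [PreconnectedSpace G]

theorem fst_symm_apply_mk_fst_apply [TotallyDisconnectedSpace X] (h : X × G ≃ₜ Y × G) (x : X)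
    (g g' : G) : (h.symm ((h (x, g)).1, g')).1 = x := by
  have hslice : Continuous fun g'' => (h.symm ((h (x, g)).1, g'')).1 := by fun_prop
  rw [TotallyDisconnectedSpace.eq_of_continuous _ hslice g' (h (x, g)).2, Prod.mk.eta,
    symm_apply_apply]

def prodCancelRight [TotallyDisconnectedSpace X] [TotallyDisconnectedSpace Y]
    (h : X × G ≃ₜ Y × G) (g₀ : G) : X ≃ₜ Y where
  toFun x := (h (x, g₀)).1
  invFun y := (h.symm (y, g₀)).1
  left_inv x := h.fst_symm_apply_mk_fst_apply x g₀ g₀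
  right_inv y := h.symm.fst_symm_apply_mk_fst_apply y g₀ g₀
  continuous_toFun := by fun_prop
  continuous_invFun := by fun_prop

end Homeomorph

theorem statement11_general
    (K : Set (ℕ → Bool))
    -- `K` is homeomorphic to `K ⊔ K ⊔ K` but not to `K ⊔ K`
    (h3 : Nonempty (K ≃ₜ (↥K ⊕ ↥K ⊕ ↥K))) (h2 : IsEmpty (K ≃ₜ (↥K ⊕ ↥K)))
    (G : Type*) [TopologicalSpace G]
    [ConnectedSpace G] :
    HomeoToClopenSubset (↥K × G) ((↥K ⊕ ↥K) × G) ∧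
    HomeoToClopenSubset ((↥K ⊕ ↥K) × G) (↥K × G) ∧
    IsEmpty ((↥K × G) ≃ₜ ((↥K ⊕ ↥K) × G)) := by
  obtain ⟨e3⟩ := h3
  refine ⟨homeoToClopenSubset_sum_left.prod_right G,
    (homeoToClopenSubset_sum_right.trans_homeomorph e3.symm).prod_right G, ⟨fun h => ?_⟩⟩
  exact h2.false (h.prodCancelRight (Classical.arbitrary G))

theorem statement11
    -- `K` is a nonempty closed subset of the Cantor set
    (K : Set (ℕ → Bool)) (hKne : K.Nonempty) (hKcl : IsClosed K)
    -- `K` is homeomorphic to `K ⊔ K ⊔ K` but not to `K ⊔ K`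
    (h3 : Nonempty (K ≃ₜ (↥K ⊕ ↥K ⊕ ↥K))) (h2 : IsEmpty (K ≃ₜ (↥K ⊕ ↥K)))
    -- `G` is a connected metrizable space with at least two points such that every
    -- continuous self-map of `G` is constant or the identity
    (G : Type*) [TopologicalSpace G] [TopologicalSpace.MetrizableSpace G]
    [ConnectedSpace G] [Nontrivial G]
    (hG : ∀ f : G → G, Continuous f → (∃ c, f = fun _ => c) ∨ f = id) :
    HomeoToClopenSubset (↥K × G) ((↥K ⊕ ↥K) × G) ∧
    HomeoToClopenSubset ((↥K ⊕ ↥K) × G) (↥K × G) ∧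
    IsEmpty ((↥K × G) ≃ₜ ((↥K ⊕ ↥K) × G)) :=
  statement11_general K h3 h2 G
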